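/- arXiv:0912.1659 — 3 statements merged into one kernel-verified Lean document; each statement's English description precedes it below -/
import Mathlib

section
/- Let a, b, c, d ∈ ℤ be such that q := ad - bc is a prime with q ≡ 3 (mod 4). Then the lattice Λ generated by (a,b) and (c,d) in ℝ² is universally concyclic. -/
/-!
Identify ℝ² with ℂ, so that `Λ` is a subgroup of `ℤ[i]` of prime index `|q|`, `q = ad - bc`.
We find `τ ∈ ℤ[i]` with `τ ℤ[i] ⊆ Λ` and `q ∣ N τ` such that, for `q ∤ M`, every `w ∈ Λ` with
`q ∣ N (M w - τ)` is a multiple of `τ`. If some `v ∈ Λ` has `q ∤ N v`, take `τ = q`: for `w ∈ Λ`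
the determinant `det (v, w)` is divisible by `q`, which together with `q ∣ N w` forces `q ∣ w`.
Otherwise `q` divides every norm on `Λ`; then `Λ` is closed under multiplication by `i`, hence an
ideal, and `τ` is a generator.

The lattice points on the circle with centre `τ / M` and `|M w - τ|² = N τ · K` are then the
`τ z` with `N (M z - 1) = K`, i.e. they correspond to the `u` of norm `K` with `u ≡ -1 (mod M)`.
An element of norm `5 ^ K` is `i ^ j (2 + i) ^ s (2 - i) ^ (K - s)` for exactly one `j < 4`,
`s ≤ K`. Exactly two of its four associates are `≡ -1 (mod 2)`, and when `K` is even exactly one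
is `≡ -1 (mod 4)`. So `M = 2`, `K = 5 ^ k` gives `2k + 2` points and `M = 4`, `K = 5 ^ (2k)`
gives `2k + 1`; both moduli are prime to the odd prime `q`.
-/

open Zsqrtd Finset

local notation "ℤ[i]" => GaussianInt

instance Zsqrtd.isLocalHom_normMonoidHom (d : ℤ) : IsLocalHom (normMonoidHom (d := d)) :=
  ⟨fun _ hx => norm_eq_one_iff.mp (Int.isUnit_iff_natAbs_eq.mp hx)⟩

theorem Int.emod_four_of_sq_add_sq_emod_eight {x y : ℤ} (h : (x ^ 2 + y ^ 2) % 8 = 1) :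
    x % 2 = 1 ∧ y % 4 = 0 ∨ x % 4 = 0 ∧ y % 2 = 1 := by
  have hmod : (x ^ 2 + y ^ 2) % 8 = ((x % 8) ^ 2 + (y % 8) ^ 2) % 8 := by
    simp [pow_two, Int.add_emod, Int.mul_emod]
  have hx := Int.emod_nonneg x (by norm_num : (8 : ℤ) ≠ 0)
  have hx' := Int.emod_lt_of_pos x (by norm_num : (0 : ℤ) < 8)
  have hy := Int.emod_nonneg y (by norm_num : (8 : ℤ) ≠ 0)
  have hy' := Int.emod_lt_of_pos y (by norm_num : (0 : ℤ) < 8)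
  interval_cases hx8 : x % 8 <;> interval_cases hy8 : y % 8 <;> omega

theorem Int.emod_two_of_odd_sq_add_sq {x y : ℤ} (h : Odd (x ^ 2 + y ^ 2)) :
    x % 2 = 1 ∧ y % 2 = 0 ∨ x % 2 = 0 ∧ y % 2 = 1 := by
  rw [Int.odd_add, Int.odd_pow' two_ne_zero, Int.even_pow' two_ne_zero, Int.odd_iff,
    Int.even_iff] at h
  omega

theorem Prime.dvd_and_dvd_of_dvd_sq_add_sq {q α β x y : ℤ} (hq : Prime q)
    (hαβ : ¬ q ∣ α ^ 2 + β ^ 2) (hdet : q ∣ α * y - β * x) (hxy : q ∣ x ^ 2 + y ^ 2) :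
    q ∣ x ∧ q ∣ y := by
  have hx : q ∣ (α ^ 2 + β ^ 2) * x ^ 2 := by
    rw [show (α ^ 2 + β ^ 2) * x ^ 2 = α ^ 2 * (x ^ 2 + y ^ 2) - (α * y - β * x) * (α * y + β * x)
      by ring]
    exact dvd_sub (hxy.mul_left _) (hdet.mul_right _)
  have hy : q ∣ (α ^ 2 + β ^ 2) * y ^ 2 := by
    rw [show (α ^ 2 + β ^ 2) * y ^ 2 = β ^ 2 * (x ^ 2 + y ^ 2) + (α * y - β * x) * (α * y + β * x)
      by ring]
    exact dvd_add (hxy.mul_left _) (hdet.mul_right _)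
  exact ⟨hq.dvd_of_dvd_pow ((hq.dvd_or_dvd hx).resolve_left hαβ),
    hq.dvd_of_dvd_pow ((hq.dvd_or_dvd hy).resolve_left hαβ)⟩

theorem Prime.not_dvd_four_of_emod_four_eq_three {p : ℤ} (hp : Prime p) (h : p % 4 = 3) :
    ¬ p ∣ 4 := by
  intro h4
  have h2 : p.natAbs ∣ 2 :=
    Int.natAbs_dvd_natAbs.mpr (hp.dvd_of_dvd_pow (a := 2) (n := 2) (by norm_num [h4]))
  have h1 : p.natAbs ≠ 1 := fun h1 => hp.not_isUnit (Int.isUnit_iff_natAbs_eq.mpr h1)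
  have := Nat.le_of_dvd two_pos h2
  omega

namespace GaussianInt

theorem norm_eq_sq_add_sq (u : ℤ[i]) : u.norm = u.re ^ 2 + u.im ^ 2 := by
  rw [norm_def]; ring

theorem exists_eq_sqrtd_pow_of_norm_eq_one {u : ℤ[i]} (h : u.norm = 1) :
    ∃ j < 4, u = sqrtd ^ j := by
  obtain ⟨x, y⟩ := u
  rw [norm_eq_sq_add_sq] at h
  obtain ⟨hx1, hx2⟩ := abs_le.mp (sq_le_one_iff_abs_le_one x |>.mp (by nlinarith [sq_nonneg y]))
  obtain ⟨hy1, hy2⟩ := abs_le.mp (sq_le_one_iff_abs_le_one y |>.mp (by nlinarith [sq_nonneg x]))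
  interval_cases x <;> interval_cases y <;> simp at h
  exacts [⟨2, by decide⟩, ⟨3, by decide⟩, ⟨1, by decide⟩, ⟨0, by decide⟩]

def twoAddI : ℤ[i] := ⟨2, 1⟩

theorem norm_twoAddI : twoAddI.norm = 5 := rfl

theorem twoAddI_mul_star : twoAddI * star twoAddI = 5 := by decide

theorem prime_twoAddI : Prime twoAddI := by
  rw [← irreducible_iff_prime]
  refine Irreducible.of_map (f := normMonoidHom) ?_
  change Irreducible twoAddI.norm
  rw [norm_twoAddI, irreducible_iff_prime]
  exact Int.prime_iff_natAbs_prime.mpr (by norm_num)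

theorem not_twoAddI_dvd_star : ¬ twoAddI ∣ star twoAddI := by
  intro h
  have h4 : twoAddI ∣ 4 := by
    simpa [show twoAddI + star twoAddI = 4 by decide] using (dvd_refl twoAddI).add h
  exact absurd (map_dvd normMonoidHom h4) (by decide)

theorem norm_sqrtd_pow_mul (j : ℕ) (w : ℤ[i]) : (sqrtd ^ j * w).norm = w.norm := by
  change normMonoidHom _ = normMonoidHom _
  rw [map_mul, map_pow]
  change (sqrtd : ℤ[i]).norm ^ j * _ = _
  rw [show (sqrtd : ℤ[i]).norm = 1 by decide, one_pow, one_mul]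

theorem norm_twoAddI_pow_mul (s t : ℕ) :
    (twoAddI ^ s * star twoAddI ^ t).norm = 5 ^ (s + t) := by
  change normMonoidHom _ = _
  rw [map_mul, map_pow, map_pow]
  change twoAddI.norm ^ s * (star twoAddI).norm ^ t = _
  rw [norm_conj, norm_twoAddI, pow_add]

theorem emultiplicity_twoAddI (j s t : ℕ) :
    emultiplicity twoAddI (sqrtd ^ j * (twoAddI ^ s * star twoAddI ^ t) : ℤ[i]) = s := by
  have hunit : IsUnit (sqrtd ^ j : ℤ[i]) := (IsUnit.of_mul_eq_one (-sqrtd) (by decide)).pow j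
  rw [emultiplicity_mul prime_twoAddI, emultiplicity_mul prime_twoAddI,
    emultiplicity_pow_self_of_prime prime_twoAddI,
    emultiplicity_eq_zero.mpr fun h => prime_twoAddI.not_isUnit (isUnit_of_dvd_unit h hunit),
    emultiplicity_eq_zero.mpr fun h => not_twoAddI_dvd_star (prime_twoAddI.dvd_of_dvd_pow h)]
  simp

theorem exists_eq_of_norm_eq_five_pow (K : ℕ) {u : ℤ[i]} (h : u.norm = 5 ^ K) :
    ∃ j < 4, ∃ s ≤ K, u = sqrtd ^ j * (twoAddI ^ s * star twoAddI ^ (K - s)) := by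
  induction K generalizing u with
  | zero =>
    obtain ⟨j, hj, rfl⟩ := exists_eq_sqrtd_pow_of_norm_eq_one (by simpa using h)
    exact ⟨j, hj, 0, le_rfl, by simp⟩
  | succ K ih =>
    have hnorm_cancel {π v : ℤ[i]} (hπ : π.norm = 5) (hv : (π * v).norm = 5 ^ (K + 1)) :
        v.norm = 5 ^ K := by
      rw [norm_mul, hπ, pow_succ'] at hv
      exact mul_left_cancel₀ (by norm_num) hv
    have hdvd : twoAddI ∣ u * star u := by
      rw [← norm_eq_mul_conj, h]
      push_cast
      rw [← twoAddI_mul_star, mul_pow]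
      exact (dvd_pow_self _ K.succ_ne_zero).mul_right _
    rcases prime_twoAddI.dvd_or_dvd hdvd with ⟨v, rfl⟩ | ⟨v, hv⟩
    · obtain ⟨j, hj, s, hs, rfl⟩ := ih (hnorm_cancel norm_twoAddI h)
      refine ⟨j, hj, s + 1, by omega, ?_⟩
      rw [Nat.succ_sub_succ]; ring
    · have hu : u = star twoAddI * star v := by
        simpa [mul_comm] using congrArg star hv
      subst hu
      obtain ⟨j, hj, s, hs, hv'⟩ := ih (hnorm_cancel (by rw [norm_conj, norm_twoAddI]) h)
      refine ⟨j, hj, s, by omega, ?_⟩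
      rw [hv', show K + 1 - s = K - s + 1 by omega]; ring

theorem sqrtd_pow_mul_twoAddI_pow_inj {K j₁ j₂ s₁ s₂ : ℕ} (hj₁ : j₁ < 4) (hj₂ : j₂ < 4)
    (h : (sqrtd ^ j₁ * (twoAddI ^ s₁ * star twoAddI ^ (K - s₁)) : ℤ[i]) =
      sqrtd ^ j₂ * (twoAddI ^ s₂ * star twoAddI ^ (K - s₂))) :
    j₁ = j₂ ∧ s₁ = s₂ := by
  have hs : s₁ = s₂ := by
    exact_mod_cast (emultiplicity_twoAddI j₁ _ _).symm.trans
      ((congrArg _ h).trans (emultiplicity_twoAddI j₂ _ _))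
  subst hs
  have hne : twoAddI ^ s₁ * star twoAddI ^ (K - s₁) ≠ 0 :=
    mul_ne_zero (pow_ne_zero _ prime_twoAddI.ne_zero)
      (pow_ne_zero _ (star_ne_zero.mpr prime_twoAddI.ne_zero))
  have hpow := mul_right_cancel₀ hne h
  refine ⟨?_, rfl⟩
  interval_cases j₁ <;> interval_cases j₂ <;> revert hpow <;> decide

theorem ncard_norm_eq_five_pow_and (P : ℤ[i] → Prop) [DecidablePred P] (K c : ℕ)
    (hP : ∀ w : ℤ[i], w.norm = 5 ^ K → ((range 4).filter fun j => P (sqrtd ^ j * w)).card = c) :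
    {u : ℤ[i] | u.norm = 5 ^ K ∧ P u}.ncard = c * (K + 1) := by
  set w : ℕ → ℤ[i] := fun s => twoAddI ^ s * star twoAddI ^ (K - s)
  set F : ℕ × ℕ → ℤ[i] := fun js => sqrtd ^ js.1 * w js.2
  have hnorm (s : ℕ) (hs : s ≤ K) : (w s).norm = 5 ^ K := by
    rw [norm_twoAddI_pow_mul, Nat.add_sub_cancel' hs]
  have himage : {u : ℤ[i] | u.norm = 5 ^ K ∧ P u} =
      F '' ↑((range 4 ×ˢ range (K + 1)).filter (P ∘ F)) := by
    ext u
    constructor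
    · rintro ⟨hu, hP⟩
      obtain ⟨j, hj, s, hs, rfl⟩ := exists_eq_of_norm_eq_five_pow K hu
      exact ⟨(j, s), mem_filter.mpr
        ⟨mem_product.mpr ⟨mem_range.mpr hj, mem_range.mpr (Nat.lt_succ_of_le hs)⟩, hP⟩, rfl⟩
    · rintro ⟨js, hjs, rfl⟩
      simp only [coe_filter, mem_product, mem_range, Set.mem_ofPred_eq] at hjs
      exact ⟨(norm_sqrtd_pow_mul _ _).trans (hnorm _ (by omega)), hjs.2⟩
  have hinj : Set.InjOn F ↑((range 4 ×ˢ range (K + 1)).filter (P ∘ F)) := by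
    rintro ⟨j₁, s₁⟩ h₁ ⟨j₂, s₂⟩ h₂ h
    simp only [coe_filter, mem_product, mem_range, Set.mem_ofPred_eq] at h₁ h₂
    obtain ⟨rfl, rfl⟩ := sqrtd_pow_mul_twoAddI_pow_inj h₁.1.1 h₂.1.1 h
    rfl
  rw [himage, hinj.ncard_image, Set.ncard_coe_finset, card_filter, sum_product_right]
  calc ∑ s ∈ range (K + 1), ∑ j ∈ range 4, (if (P ∘ F) (j, s) then 1 else 0)
      = ∑ s ∈ range (K + 1), c := by
        refine sum_congr rfl fun s hs => ?_
        rw [← card_filter]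
        exact hP _ (hnorm s (by simpa [Nat.lt_succ_iff] using hs))
    _ = c * (K + 1) := by simp [mul_comm]

theorem ofNat_dvd_iff (n : ℕ) [n.AtLeastTwo] (u : ℤ[i]) :
    (ofNat(n) : ℤ[i]) ∣ u ↔ (ofNat(n) : ℤ) ∣ u.re ∧ (ofNat(n) : ℤ) ∣ u.im := by
  rw [← intCast_dvd]; norm_num

open scoped Classical in
theorem card_filter_four_dvd_sqrtd_pow_mul_add_one {w : ℤ[i]} (hw : w.norm % 8 = 1) :
    ((range 4).filter fun j => (4 : ℤ[i]) ∣ sqrtd ^ j * w + 1).card = 1 := by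
  rw [norm_eq_sq_add_sq] at hw
  have := Int.emod_four_of_sq_add_sq_emod_eight hw
  rw [card_filter]
  simp only [sum_range_succ, sum_range_zero, pow_succ, pow_zero, one_mul, ofNat_dvd_iff, re_add,
    im_add, re_mul, im_mul, re_sqrtd, im_sqrtd, re_one, im_one]
  split_ifs <;> omega

open scoped Classical in
theorem card_filter_two_dvd_sqrtd_pow_mul_add_one {w : ℤ[i]} (hw : Odd w.norm) :
    ((range 4).filter fun j => (2 : ℤ[i]) ∣ sqrtd ^ j * w + 1).card = 2 := by
  rw [norm_eq_sq_add_sq] at hw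
  have := Int.emod_two_of_odd_sq_add_sq hw
  rw [card_filter]
  simp only [sum_range_succ, sum_range_zero, pow_succ, pow_zero, one_mul, ofNat_dvd_iff, re_add,
    im_add, re_mul, im_mul, re_sqrtd, im_sqrtd, re_one, im_one]
  split_ifs <;> omega

theorem ncard_norm_eq_five_pow_two_dvd_add_one (k : ℕ) :
    {u : ℤ[i] | u.norm = 5 ^ k ∧ 2 ∣ u + 1}.ncard = 2 * k + 2 := by
  classical
  have h := ncard_norm_eq_five_pow_and (fun u : ℤ[i] => 2 ∣ u + 1) k 2 fun w hw =>
    card_filter_two_dvd_sqrtd_pow_mul_add_one (by rw [hw]; exact Odd.pow (by decide))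
  rw [h]; ring

theorem ncard_norm_eq_five_pow_four_dvd_add_one (k : ℕ) :
    {u : ℤ[i] | u.norm = 5 ^ (2 * k) ∧ 4 ∣ u + 1}.ncard = 2 * k + 1 := by
  classical
  have h25 : (5 : ℤ) ^ (2 * k) % 8 = 1 := by
    rw [pow_mul]
    simpa [Int.ModEq] using Int.ModEq.pow k (show (5 : ℤ) ^ 2 ≡ 1 [ZMOD 8] by decide)
  have h := ncard_norm_eq_five_pow_and (fun u : ℤ[i] => 4 ∣ u + 1) (2 * k) 1 fun w hw =>
    card_filter_four_dvd_sqrtd_pow_mul_add_one (by rw [hw]; exact h25)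
  rw [h]; ring

theorem ncard_norm_mul_sub_one_eq {M : ℤ[i]} (hM : M ≠ 0) (K : ℤ) :
    {z : ℤ[i] | (M * z - 1).norm = K}.ncard = {u : ℤ[i] | u.norm = K ∧ M ∣ u + 1}.ncard := by
  have himage :
      {u : ℤ[i] | u.norm = K ∧ M ∣ u + 1} = (M * · - 1) '' {z | (M * z - 1).norm = K} := by
    ext u
    constructor
    · rintro ⟨hu, z, hz⟩
      exact ⟨z, by rw [Set.mem_ofPred_eq, ← hz, add_sub_cancel_right, hu], sub_eq_of_eq_add hz.symm⟩
    · rintro ⟨z, hz, rfl⟩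
      exact ⟨hz, z, by ring⟩
  rw [himage, Set.InjOn.ncard_image fun z _ z' _ h => mul_left_cancel₀ hM (sub_left_inj.mp h)]

def lattice (a b c d : ℤ) : Set ℤ[i] := {w | ∃ m k : ℤ, w = ⟨m * a + k * c, m * b + k * d⟩}

section Lattice

variable {a b c d : ℤ}

theorem mem_lattice_iff (hq : a * d - b * c ≠ 0) {w : ℤ[i]} :
    w ∈ lattice a b c d ↔
      a * d - b * c ∣ d * w.re - c * w.im ∧ a * d - b * c ∣ a * w.im - b * w.re := by
  constructor
  · rintro ⟨m, k, rfl⟩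
    exact ⟨⟨m, by ring⟩, ⟨k, by ring⟩⟩
  · rintro ⟨⟨m, hm⟩, ⟨k, hk⟩⟩
    refine ⟨m, k, Zsqrtd.ext ?_ ?_⟩
    · exact mul_left_cancel₀ hq (by linear_combination a * hm + c * hk)
    · exact mul_left_cancel₀ hq (by linear_combination b * hm + d * hk)

theorem add_mem_lattice {v w : ℤ[i]} (hv : v ∈ lattice a b c d) (hw : w ∈ lattice a b c d) :
    v + w ∈ lattice a b c d := by
  obtain ⟨m, k, rfl⟩ := hv
  obtain ⟨m', k', rfl⟩ := hw
  exact ⟨m + m', k + k', by ext <;> simp <;> ring⟩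

theorem intCast_det_mul_mem_lattice (z : ℤ[i]) :
    ((a * d - b * c : ℤ) : ℤ[i]) * z ∈ lattice a b c d :=
  ⟨d * z.re - c * z.im, a * z.im - b * z.re, by ext <;> simp <;> ring⟩

theorem det_dvd_of_mem_lattice {v w : ℤ[i]} (hv : v ∈ lattice a b c d)
    (hw : w ∈ lattice a b c d) : a * d - b * c ∣ v.re * w.im - v.im * w.re := by
  obtain ⟨m, k, rfl⟩ := hv
  obtain ⟨m', k', rfl⟩ := hw
  exact ⟨m * k' - k * m', by ring⟩

theorem intCast_det_dvd_of_mem_lattice (hq : Prime (a * d - b * c)) {v w : ℤ[i]}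
    (hv : v ∈ lattice a b c d) (hv' : ¬ a * d - b * c ∣ v.norm)
    (hw : w ∈ lattice a b c d) (hw' : a * d - b * c ∣ w.norm) :
    ((a * d - b * c : ℤ) : ℤ[i]) ∣ w := by
  rw [norm_eq_sq_add_sq] at hv' hw'
  rw [intCast_dvd]
  exact hq.dvd_and_dvd_of_dvd_sq_add_sq hv' (det_dvd_of_mem_lattice hv hw) hw'

theorem exists_forall_mem_lattice_iff_dvd (hq : Prime (a * d - b * c))
    (hnorm : ∀ v ∈ lattice a b c d, a * d - b * c ∣ v.norm) :
    ∃ τ : ℤ[i], ∀ w, w ∈ lattice a b c d ↔ τ ∣ w := by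
  set q := a * d - b * c
  set g : ℤ[i] := ⟨a, b⟩
  set h : ℤ[i] := ⟨c, d⟩
  have hg : q ∣ a ^ 2 + b ^ 2 := by
    simpa [norm_eq_sq_add_sq] using hnorm g ⟨1, 0, by simp [g]⟩
  have hh : q ∣ c ^ 2 + d ^ 2 := by
    simpa [norm_eq_sq_add_sq] using hnorm h ⟨0, 1, by simp [h]⟩
  have hgh : q ∣ a * c + b * d := by
    refine hq.dvd_of_dvd_pow (n := 2) ?_
    rw [show (a * c + b * d) ^ 2 = (a ^ 2 + b ^ 2) * (c ^ 2 + d ^ 2) - q * q by ring]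
    exact dvd_sub (hg.mul_right _) (dvd_mul_right q q)
  have hmul (x : ℤ[i]) : g * x ∈ lattice a b c d ∧ h * x ∈ lattice a b c d := by
    simp only [mem_lattice_iff hq.ne_zero, re_mul, im_mul, g, h]
    refine ⟨⟨?_, ?_⟩, ?_, ?_⟩
    · rw [show d * (a * x.re + -1 * b * x.im) - c * (a * x.im + b * x.re)
        = q * x.re - (a * c + b * d) * x.im by ring]
      exact dvd_sub (dvd_mul_right q _) (hgh.mul_right _)
    · rw [show a * (a * x.im + b * x.re) - b * (a * x.re + -1 * b * x.im)
        = (a ^ 2 + b ^ 2) * x.im by ring]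
      exact hg.mul_right _
    · rw [show d * (c * x.re + -1 * d * x.im) - c * (c * x.im + d * x.re)
        = -((c ^ 2 + d ^ 2) * x.im) by ring]
      exact (hh.mul_right _).neg_right
    · rw [show a * (c * x.im + d * x.re) - b * (c * x.re + -1 * d * x.im)
        = q * x.re + (a * c + b * d) * x.im by ring]
      exact dvd_add (dvd_mul_right q _) (hgh.mul_right _)
  refine ⟨EuclideanDomain.gcd g h, fun w => ⟨?_, ?_⟩⟩
  · rintro ⟨m, k, rfl⟩
    rw [show (⟨m * a + k * c, m * b + k * d⟩ : ℤ[i]) = m * g + k * h by ext <;> simp [g, h]]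
    exact dvd_add ((EuclideanDomain.gcd_dvd_left g h).mul_left _)
      ((EuclideanDomain.gcd_dvd_right g h).mul_left _)
  · rintro ⟨z, rfl⟩
    rw [EuclideanDomain.gcd_eq_gcd_ab, add_mul, mul_assoc, mul_assoc]
    exact add_mem_lattice (hmul _).1 (hmul _).2

theorem exists_mul_mem_lattice_and_dvd (hq : Prime (a * d - b * c)) :
    ∃ τ : ℤ[i], τ ≠ 0 ∧ a * d - b * c ∣ τ.norm ∧ (∀ z, τ * z ∈ lattice a b c d) ∧
      ∀ M : ℤ, ¬ a * d - b * c ∣ M → ∀ w ∈ lattice a b c d,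
        a * d - b * c ∣ ((M : ℤ[i]) * w - τ).norm → τ ∣ w := by
  set q := a * d - b * c
  by_cases hall : ∀ v ∈ lattice a b c d, q ∣ v.norm
  · obtain ⟨τ, hτ⟩ := exists_forall_mem_lattice_iff_dvd hq hall
    have hqτ : τ ∣ (q : ℤ[i]) := (hτ _).mp <| by
      simpa only [mul_one] using intCast_det_mul_mem_lattice (a := a) (b := b) (c := c) (d := d) 1
    refine ⟨τ, ?_, hall τ ((hτ τ).mpr dvd_rfl), fun z => (hτ _).mpr (dvd_mul_right τ z),
      fun _ _ w hw _ => (hτ w).mp hw⟩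
    rintro rfl
    exact hq.ne_zero (by exact_mod_cast zero_dvd_iff.mp hqτ)
  · obtain ⟨v, hv, hv'⟩ := not_forall₂.mp hall
    refine ⟨q, by exact_mod_cast hq.ne_zero, by rw [norm_intCast]; exact dvd_mul_right q q,
      intCast_det_mul_mem_lattice,
      fun M hM w hw hN => intCast_det_dvd_of_mem_lattice hq hv hv' hw ?_⟩
    have hnorm : ((M : ℤ[i]) * w - q).norm = M ^ 2 * w.norm + q * (q - 2 * M * w.re) := by
      simp only [norm_eq_sq_add_sq, re_sub, im_sub, re_mul, im_mul, re_intCast, im_intCast]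
      ring
    rw [hnorm, dvd_add_left (dvd_mul_right q _)] at hN
    exact (hq.dvd_or_dvd hN).resolve_left fun h => hM (hq.dvd_of_dvd_pow h)

end Lattice

theorem re_im_mem_circle_iff {M : ℤ} (hM : M ≠ 0) (τ w : ℤ[i]) (K : ℤ) :
    ((w.re : ℝ) - τ.re / M) ^ 2 + ((w.im : ℝ) - τ.im / M) ^ 2 = τ.norm * K / M ^ 2 ↔
      ((M : ℤ[i]) * w - τ).norm = τ.norm * K := by
  have hM' : (M : ℝ) ≠ 0 := by exact_mod_cast hM
  have hlhs : ((w.re : ℝ) - τ.re / M) ^ 2 + ((w.im : ℝ) - τ.im / M) ^ 2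
      = (((M : ℤ[i]) * w - τ).norm : ℝ) / M ^ 2 := by
    simp only [norm_eq_sq_add_sq, re_sub, im_sub, re_mul, im_mul, re_intCast, im_intCast]
    push_cast
    field_simp
    ring
  rw [hlhs, div_left_inj' (pow_ne_zero 2 hM')]
  exact_mod_cast Iff.rfl

theorem setOf_lattice_circle_eq_image (a b c d : ℤ) {M : ℤ} (hM : M ≠ 0) (τ : ℤ[i]) (K : ℤ) :
    {v : ℝ × ℝ | (∃ m k : ℤ, v = (((m * a + k * c : ℤ) : ℝ), ((m * b + k * d : ℤ) : ℝ))) ∧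
        (v.1 - τ.re / M) ^ 2 + (v.2 - τ.im / M) ^ 2 = τ.norm * K / M ^ 2} =
      (fun w : ℤ[i] => ((w.re : ℝ), (w.im : ℝ))) ''
        {w | w ∈ lattice a b c d ∧ ((M : ℤ[i]) * w - τ).norm = τ.norm * K} := by
  ext v
  constructor
  · rintro ⟨⟨m, k, rfl⟩, hv⟩
    exact ⟨⟨m * a + k * c, m * b + k * d⟩, ⟨⟨m, k, rfl⟩, (re_im_mem_circle_iff hM _ _ K).mp hv⟩,
      rfl⟩
  · rintro ⟨w, ⟨⟨m, k, rfl⟩, hw⟩, rfl⟩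
    exact ⟨⟨m, k, rfl⟩, (re_im_mem_circle_iff hM _ _ K).mpr hw⟩

theorem ncard_setOf_norm_mul_sub_eq {L : Set ℤ[i]} {τ : ℤ[i]} (hτ : τ ≠ 0) (M : ℤ[i]) (K : ℤ)
    (hL : ∀ z, τ * z ∈ L) (hdvd : ∀ w ∈ L, (M * w - τ).norm = τ.norm * K → τ ∣ w) :
    {w | w ∈ L ∧ (M * w - τ).norm = τ.norm * K}.ncard = {z | (M * z - 1).norm = K}.ncard := by
  have hnorm (z : ℤ[i]) : (M * (τ * z) - τ).norm = τ.norm * (M * z - 1).norm := by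
    rw [← norm_mul]; ring_nf
  have himage : {w | w ∈ L ∧ (M * w - τ).norm = τ.norm * K} =
      (τ * ·) '' {z | (M * z - 1).norm = K} := by
    ext w
    constructor
    · rintro ⟨hw, hK⟩
      obtain ⟨z, rfl⟩ := hdvd w hw hK
      rw [hnorm] at hK
      exact ⟨z, mul_left_cancel₀ (norm_eq_zero.not.mpr hτ) hK, rfl⟩
    · rintro ⟨z, hz, rfl⟩
      exact ⟨hL z, by rw [hnorm, Set.mem_ofPred_eq.mp hz]⟩
  rw [himage, Set.InjOn.ncard_image fun z _ z' _ h => mul_left_cancel₀ hτ h]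

theorem exists_circle_ncard_lattice_eq {a b c d : ℤ} (hq : Prime (a * d - b * c)) {M : ℤ}
    (hM : ¬ a * d - b * c ∣ M) {K : ℤ} (hK : 0 < K) :
    ∃ c₁ c₂ r : ℝ, 0 < r ∧
      Set.ncard {v : ℝ × ℝ |
        (∃ m k : ℤ, v = (((m * a + k * c : ℤ) : ℝ), ((m * b + k * d : ℤ) : ℝ))) ∧
        (v.1 - c₁) ^ 2 + (v.2 - c₂) ^ 2 = r ^ 2} =
      {u : ℤ[i] | u.norm = K ∧ (M : ℤ[i]) ∣ u + 1}.ncard := by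
  obtain ⟨τ, hτ, hqτ, hL, hdvd⟩ := exists_mul_mem_lattice_and_dvd hq
  have hM0 : M ≠ 0 := by rintro rfl; exact hM (dvd_zero _)
  have hr : (0 : ℝ) < τ.norm * K / M ^ 2 := by
    have : (0 : ℝ) < τ.norm := by exact_mod_cast norm_pos.mpr hτ
    positivity
  refine ⟨τ.re / M, τ.im / M, √(τ.norm * K / M ^ 2), Real.sqrt_pos.mpr hr, ?_⟩
  rw [Real.sq_sqrt hr.le, setOf_lattice_circle_eq_image a b c d hM0,
    Set.InjOn.ncard_image fun w _ w' _ h => by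
      simp only [Prod.mk.injEq, Int.cast_inj] at h
      exact Zsqrtd.ext h.1 h.2,
    ncard_setOf_norm_mul_sub_eq hτ _ K hL
      fun w hw hN => hdvd M hM w hw (hN ▸ dvd_mul_of_dvd_left hqτ K),
    ncard_norm_mul_sub_one_eq (by exact_mod_cast hM0)]

end GaussianInt

open GaussianInt in
/-- If `q := ad - bc` is a prime with `q ≡ 3 (mod 4)`, then the lattice
`Λ[(a,b),(c,d)] = {m(a,b) + k(c,d) : m, k ∈ ℤ} ⊂ ℝ²` is universally concyclic:
for every `n > 0` some circle passes through exactly `n` of its points. -/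
theorem stmt_4 (a b c d : ℤ) (hq : Prime (a * d - b * c))
    (hq3 : (a * d - b * c) % 4 = 3) (n : ℕ) (hn : 0 < n) :
    ∃ (c₁ c₂ r : ℝ), 0 < r ∧
      Set.ncard {v : ℝ × ℝ |
        (∃ m k : ℤ, v = (((m * a + k * c : ℤ) : ℝ), ((m * b + k * d : ℤ) : ℝ))) ∧
        (v.1 - c₁) ^ 2 + (v.2 - c₂) ^ 2 = r ^ 2} = n := by
  have hq4 := hq.not_dvd_four_of_emod_four_eq_three hq3
  obtain ⟨k, rfl | rfl⟩ : ∃ k, n = 2 * k + 2 ∨ n = 2 * k + 1 := ⟨(n - 1) / 2, by omega⟩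
  · obtain ⟨c₁, c₂, r, hr, h⟩ := exists_circle_ncard_lattice_eq hq (M := 2)
      (fun h2 => hq4 (h2.trans (by norm_num))) (K := 5 ^ k) (by positivity)
    refine ⟨c₁, c₂, r, hr, ?_⟩
    rw [h, ← ncard_norm_eq_five_pow_two_dvd_add_one k]
    norm_num
  · obtain ⟨c₁, c₂, r, hr, h⟩ := exists_circle_ncard_lattice_eq hq (M := 4) hq4
      (K := 5 ^ (2 * k)) (by positivity)
    refine ⟨c₁, c₂, r, hr, ?_⟩
    rw [h, ← ncard_norm_eq_five_pow_four_dvd_add_one k]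
    norm_num
end

section
/- The equilateral triangular lattice generated by (1, 0) and (-1/2, √3/2) in ℝ² is universally concyclic. -/
/-!
Identify the lattice point `m(1,0) + k(-1/2, √3/2)` with the Eisenstein integer `z = m + kω`,
`ω = e^{2πi/3}`. The lattice points on the circle with centre `(-1/3, 0)` and radius `7^{T/2}/3`
are those for which `w = 3z + 1` has norm `7^T`, i.e. the primary (`w ≡ 1 mod 3`) Eisenstein
integers of norm `7^T`. Since `7 = ϖ₁ϖ₂` with `ϖ₁, ϖ₂` primary and the only primary unit is `1`,
these are exactly the `T + 1` products `ϖ₁^j ϖ₂^(T-j)`. No unique factorisation is needed: a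
primary element of norm `7^(T+1)` is explicitly `ϖ₁` or `ϖ₂` times one of norm `7^T`, and the
products are told apart by the character `ℤ[ω] → ℤ/7`, `ω ↦ 2`, which kills `ϖ₂` but not `ϖ₁`.
-/

noncomputable section

def latticePoint (v : ℤ × ℤ) : ℝ × ℝ := ((v.1 : ℝ) - (v.2 : ℝ) / 2, (v.2 : ℝ) * (√3 / 2))

lemma latticePoint_injective : Function.Injective latticePoint := by
  rintro ⟨m, k⟩ ⟨m', k'⟩ h
  simp only [latticePoint, Prod.mk.injEq] at h
  obtain ⟨h₁, h₂⟩ := h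
  have hk : (k : ℝ) = k' := mul_right_cancel₀ (by positivity) h₂
  have hm : (m : ℝ) = m' := by linarith
  exact Prod.ext (by exact_mod_cast hm) (by exact_mod_cast hk)

@[ext]
structure EisensteinInt where
  a : ℤ
  b : ℤ

namespace EisensteinInt

def ω : ℂ := ⟨-1 / 2, √3 / 2⟩

lemma omega_sq : ω ^ 2 = -1 - ω := by
  have h3 : √3 ^ 2 = 3 := Real.sq_sqrt (by norm_num)
  apply Complex.ext <;> simp [ω, pow_two] <;> nlinarith [h3]

def toComplex (w : EisensteinInt) : ℂ := w.a + w.b * ω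

lemma toComplex_eq_latticePoint (w : EisensteinInt) :
    ((toComplex w).re, (toComplex w).im) = latticePoint (w.a, w.b) := by
  simp only [toComplex, ω, latticePoint, Prod.mk.injEq]
  constructor
  · simp; ring
  · simp

lemma toComplex_injective : Function.Injective toComplex := by
  intro w w' h
  have h' : latticePoint (w.a, w.b) = latticePoint (w'.a, w'.b) := by
    rw [← toComplex_eq_latticePoint, ← toComplex_eq_latticePoint, h]
  obtain ⟨ha, hb⟩ := Prod.mk.inj (latticePoint_injective h')
  exact EisensteinInt.ext ha hb

instance : One EisensteinInt := ⟨⟨1, 0⟩⟩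

instance : Mul EisensteinInt :=
  ⟨fun x y => ⟨x.a * y.a - x.b * y.b, x.a * y.b + x.b * y.a - x.b * y.b⟩⟩

instance : Pow EisensteinInt ℕ := ⟨fun x n => npowRec n x⟩

@[simp] lemma one_a : (1 : EisensteinInt).a = 1 := rfl
@[simp] lemma one_b : (1 : EisensteinInt).b = 0 := rfl
@[simp] lemma mul_a (x y : EisensteinInt) : (x * y).a = x.a * y.a - x.b * y.b := rfl
@[simp] lemma mul_b (x y : EisensteinInt) : (x * y).b = x.a * y.b + x.b * y.a - x.b * y.b := rfl

lemma toComplex_one : toComplex 1 = 1 := by simp [toComplex]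

lemma toComplex_mul (x y : EisensteinInt) : toComplex (x * y) = toComplex x * toComplex y := by
  simp only [toComplex, mul_a, mul_b]
  push_cast
  linear_combination (-(x.b : ℂ) * y.b) * omega_sq

lemma toComplex_pow (x : EisensteinInt) (n : ℕ) : toComplex (x ^ n) = toComplex x ^ n := by
  induction n with
  | zero => exact toComplex_one
  | succ n ih => rw [pow_succ, ← ih, ← toComplex_mul]; rfl

instance : CommMonoid EisensteinInt :=
  toComplex_injective.commMonoid _ toComplex_one toComplex_mul toComplex_pow

lemma isLeftRegular_of_toComplex_ne_zero {x : EisensteinInt} (hx : toComplex x ≠ 0) :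
    IsLeftRegular x := fun y z h ↦
  toComplex_injective <| mul_left_cancel₀ hx <| by
    simpa only [toComplex_mul] using congrArg toComplex h

def norm : EisensteinInt →* ℤ where
  toFun w := w.a ^ 2 - w.a * w.b + w.b ^ 2
  map_one' := by simp
  map_mul' x y := by simp only [mul_a, mul_b]; ring

lemma norm_apply (w : EisensteinInt) : norm w = w.a ^ 2 - w.a * w.b + w.b ^ 2 := rfl

-- `ω ↦ 2`, a root of `X² + X + 1` in `ZMod 7`
def toZModSeven : EisensteinInt →* ZMod 7 where
  toFun w := w.a + 2 * w.b
  map_one' := by simp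
  map_mul' x y := by
    simp only [mul_a, mul_b]
    have h7 : (7 : ZMod 7) = 0 := rfl
    push_cast
    linear_combination (-(x.b : ZMod 7) * y.b) * h7

def primary : Submonoid EisensteinInt where
  carrier := {w | w.a ≡ 1 [ZMOD 3] ∧ w.b ≡ 0 [ZMOD 3]}
  one_mem' := ⟨rfl, rfl⟩
  mul_mem' := by
    rintro x y ⟨hxa, hxb⟩ ⟨hya, hyb⟩
    constructor
    · simpa using (hxa.mul hya).sub (hxb.mul hyb)
    · simpa using ((hxa.mul hyb).add (hxb.mul hya)).sub (hxb.mul hyb)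

lemma mem_primary {w : EisensteinInt} : w ∈ primary ↔ w.a ≡ 1 [ZMOD 3] ∧ w.b ≡ 0 [ZMOD 3] :=
  Iff.rfl

-- conjugate primary primes with `ϖ₁ * ϖ₂ = 7`
def ϖ₁ : EisensteinInt := ⟨-2, -3⟩
def ϖ₂ : EisensteinInt := ⟨1, 3⟩

lemma ϖ₁_mem_primary : ϖ₁ ∈ primary := ⟨rfl, rfl⟩
lemma ϖ₂_mem_primary : ϖ₂ ∈ primary := ⟨rfl, rfl⟩
lemma norm_ϖ₁ : norm ϖ₁ = 7 := rfl
lemma norm_ϖ₂ : norm ϖ₂ = 7 := rfl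
lemma toZModSeven_ϖ₁ : toZModSeven ϖ₁ = -1 := rfl
lemma toZModSeven_ϖ₂ : toZModSeven ϖ₂ = 0 := rfl

lemma isLeftRegular_ϖ₁ : IsLeftRegular ϖ₁ :=
  isLeftRegular_of_toComplex_ne_zero fun h ↦ by
    have := congrArg Complex.re h
    norm_num [toComplex, ϖ₁, ω] at this

lemma isLeftRegular_ϖ₂ : IsLeftRegular ϖ₂ :=
  isLeftRegular_of_toComplex_ne_zero fun h ↦ by
    have := congrArg Complex.re h
    norm_num [toComplex, ϖ₂, ω] at this

lemma eq_one_of_norm_eq_one {w : EisensteinInt} (hw : w ∈ primary) (h : norm w = 1) : w = 1 := by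
  obtain ⟨m, k⟩ := w
  obtain ⟨hm, hk⟩ := hw
  dsimp only [Int.ModEq] at hm hk
  rw [norm_apply] at h
  have h4 : (2 * m - k) ^ 2 + 3 * k ^ 2 = 4 := by linear_combination 4 * h
  obtain rfl : k = 0 := by
    have : -1 ≤ k ∧ k ≤ 1 := by constructor <;> nlinarith [sq_nonneg (2 * m - k)]
    omega
  obtain rfl : m = 1 := by
    have : -1 ≤ m ∧ m ≤ 1 := by constructor <;> nlinarith
    omega
  rfl

lemma pow_ϖ₂_ne_pow_ϖ₁ {d : ℕ} (hd : d ≠ 0) : ϖ₂ ^ d ≠ ϖ₁ ^ d := fun h ↦ by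
  have := congrArg toZModSeven h
  rw [map_pow, map_pow, toZModSeven_ϖ₁, toZModSeven_ϖ₂, zero_pow hd] at this
  rcases neg_one_pow_eq_or (ZMod 7) d with h' | h' <;> rw [h'] at this <;>
    exact absurd this (by decide)

lemma exists_mem_primary_eq_mul_of_norm_eq_seven_mul {w : EisensteinInt} (hw : w ∈ primary)
    {N : ℤ} (hN : norm w = 7 * N) :
    ∃ v ∈ primary, norm v = N ∧ (w = ϖ₁ * v ∨ w = ϖ₂ * v) := by
  obtain ⟨a, b⟩ := w
  obtain ⟨ha, hb⟩ := hw
  simp only [Int.ModEq] at ha hb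
  -- `X² - X + 1 ≡ (X - 3)(X - 5) mod 7`
  have hdvd : (7 : ℤ) ∣ (a - 3 * b) * (a - 5 * b) :=
    ⟨N - a * b + 2 * b ^ 2, by rw [norm_apply] at hN; linear_combination hN⟩
  suffices ∃ v ∈ primary, (⟨a, b⟩ : EisensteinInt) = ϖ₁ * v ∨ ⟨a, b⟩ = ϖ₂ * v by
    obtain ⟨v, hv, h⟩ := this
    refine ⟨v, hv, ?_, h⟩
    rcases h with h | h <;>
      · simp only [h, map_mul, norm_ϖ₁, norm_ϖ₂] at hN
        linarith
  rcases (by norm_num : Prime (7 : ℤ)).dvd_or_dvd hdvd with ⟨c, hc⟩ | ⟨c, hc⟩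
  · refine ⟨⟨c, 3 * c + b⟩, ⟨?_, ?_⟩, .inl ?_⟩
    · simp only [Int.ModEq]; omega
    · simp only [Int.ModEq]; omega
    · ext <;> simp only [ϖ₁, mul_a, mul_b] <;> linarith
  · refine ⟨⟨-2 * c - b, -3 * c - 2 * b⟩, ⟨?_, ?_⟩, .inr ?_⟩
    · simp only [Int.ModEq]; omega
    · simp only [Int.ModEq]; omega
    · ext <;> simp only [ϖ₂, mul_a, mul_b] <;> linarith

theorem exists_eq_ϖ₁_pow_mul_ϖ₂_pow {T : ℕ} {w : EisensteinInt} (hw : w ∈ primary)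
    (hT : norm w = 7 ^ T) : ∃ j ≤ T, w = ϖ₁ ^ j * ϖ₂ ^ (T - j) := by
  induction T generalizing w with
  | zero => exact ⟨0, le_rfl, by simpa using eq_one_of_norm_eq_one hw (by simpa using hT)⟩
  | succ T ih =>
    obtain ⟨v, hv, hvT, hwv | hwv⟩ :=
      exists_mem_primary_eq_mul_of_norm_eq_seven_mul hw (by rw [hT, pow_succ']) <;>
    obtain ⟨j, hj, rfl⟩ := ih hv hvT
    · refine ⟨j + 1, by omega, ?_⟩
      rw [hwv, Nat.add_sub_add_right, pow_succ', mul_assoc]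
    · refine ⟨j, by omega, ?_⟩
      rw [hwv, Nat.sub_add_comm hj, pow_succ', mul_left_comm]

lemma ϖ₁_pow_mul_ϖ₂_pow_injOn (T : ℕ) :
    Set.InjOn (fun j ↦ ϖ₁ ^ j * ϖ₂ ^ (T - j)) (Set.Iic T) := by
  suffices ∀ j j', j ≤ j' → j' ≤ T → ϖ₁ ^ j * ϖ₂ ^ (T - j) = ϖ₁ ^ j' * ϖ₂ ^ (T - j') → j = j' by
    intro j hj j' hj' h
    rcases le_total j j' with hle | hle
    · exact this j j' hle hj' h
    · exact (this j' j hle hj h.symm).symm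
  intro j j' hle hj' h
  obtain ⟨d, rfl⟩ := Nat.exists_eq_add_of_le hle
  by_contra hd
  have hreg : IsLeftRegular (ϖ₁ ^ j * ϖ₂ ^ (T - (j + d))) :=
    (isLeftRegular_ϖ₁.pow j).mul (isLeftRegular_ϖ₂.pow _)
  refine pow_ϖ₂_ne_pow_ϖ₁ (d := d) (by omega) (hreg ?_)
  rw [show T - j = T - (j + d) + d by omega] at h
  simp only [pow_add] at h ⊢
  rw [mul_assoc, h, mul_right_comm]

theorem ncard_primary_norm_eq_seven_pow (T : ℕ) :
    ((primary : Set EisensteinInt) ∩ {w | norm w = 7 ^ T}).ncard = T + 1 := by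
  have : (primary : Set EisensteinInt) ∩ {w | norm w = 7 ^ T} =
      (fun j ↦ ϖ₁ ^ j * ϖ₂ ^ (T - j)) '' Set.Iic T := by
    ext w
    constructor
    · rintro ⟨hw, hT⟩
      obtain ⟨j, hj, rfl⟩ := exists_eq_ϖ₁_pow_mul_ϖ₂_pow hw hT
      exact ⟨j, hj, rfl⟩
    · rintro ⟨j, hj, rfl⟩
      refine ⟨mul_mem (pow_mem ϖ₁_mem_primary _) (pow_mem ϖ₂_mem_primary _), ?_⟩
      simp only [Set.mem_ofPred_eq, map_mul, map_pow, norm_ϖ₁, norm_ϖ₂, ← pow_add]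
      rw [Nat.add_sub_cancel' hj]
  rw [this, (ϖ₁_pow_mul_ϖ₂_pow_injOn T).ncard_image, ← Finset.coe_Iic,
    Set.ncard_coe_finset, Nat.card_Iic]

def threeMulAddOne (v : ℤ × ℤ) : EisensteinInt := ⟨3 * v.1 + 1, 3 * v.2⟩

lemma threeMulAddOne_injective : Function.Injective threeMulAddOne := by
  rintro ⟨m, k⟩ ⟨m', k'⟩ h
  simp only [threeMulAddOne, EisensteinInt.mk.injEq] at h
  exact Prod.ext (by omega) (by omega)

lemma range_threeMulAddOne : Set.range threeMulAddOne = primary := by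
  ext w
  simp only [Set.mem_range, SetLike.mem_coe, mem_primary, Int.ModEq]
  constructor
  · rintro ⟨v, rfl⟩
    simp only [threeMulAddOne]
    omega
  · rintro ⟨ha, hb⟩
    exact ⟨((w.a - 1) / 3, w.b / 3), by ext <;> simp only [threeMulAddOne] <;> omega⟩

lemma latticePoint_mem_circle_iff (v : ℤ × ℤ) (T : ℕ) :
    ((latticePoint v).1 + 1 / 3) ^ 2 + (latticePoint v).2 ^ 2 = 7 ^ T / 9 ↔
      norm (threeMulAddOne v) = 7 ^ T := by
  have h3 : √3 ^ 2 = 3 := Real.sq_sqrt (by norm_num)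
  have key : ((latticePoint v).1 + 1 / 3) ^ 2 + (latticePoint v).2 ^ 2 =
      (norm (threeMulAddOne v) : ℝ) / 9 := by
    simp only [latticePoint, threeMulAddOne, norm_apply]
    push_cast
    linear_combination ((v.2 : ℝ) ^ 2 / 4) * h3
  rw [key, div_left_inj' (by norm_num)]
  exact_mod_cast Iff.rfl

end EisensteinInt

end

open EisensteinInt in
/-- The equilateral triangular lattice `{m(1,0) + k(-1/2, √3/2) : m, k ∈ ℤ}` is
universally concyclic. -/
theorem stmt_9 (n : ℕ) (hn : 0 < n) :
    ∃ (c₁ c₂ r : ℝ), 0 < r ∧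
      Set.ncard {x : ℝ × ℝ |
        (∃ m k : ℤ, x = ((m : ℝ) - (k : ℝ) / 2, (k : ℝ) * (Real.sqrt 3 / 2))) ∧
        (x.1 - c₁) ^ 2 + (x.2 - c₂) ^ 2 = r ^ 2} = n := by
  obtain ⟨T, rfl⟩ : ∃ T, n = T + 1 := ⟨n - 1, by omega⟩
  refine ⟨-(1 / 3), 0, √(7 ^ T / 9), by positivity, ?_⟩
  rw [← ncard_primary_norm_eq_seven_pow T, ← range_threeMulAddOne,
    ← Set.image_preimage_eq_range_inter, Set.ncard_image_of_injective _ threeMulAddOne_injective,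
    ← Set.ncard_image_of_injective _ latticePoint_injective]
  congr 1
  ext x
  simp only [Set.mem_ofPred_eq, sub_neg_eq_add, sub_zero,
    Real.sq_sqrt (by positivity : (0 : ℝ) ≤ 7 ^ T / 9)]
  constructor
  · rintro ⟨⟨m, k, rfl⟩, hx⟩
    exact ⟨(m, k), (latticePoint_mem_circle_iff (m, k) T).1 hx, rfl⟩
  · rintro ⟨v, hv, rfl⟩
    exact ⟨⟨v.1, v.2, rfl⟩, (latticePoint_mem_circle_iff v T).2 hv⟩
end

section
/- For every integer k ≥ 0, the sphere in ℝ³ defined by (4x - 1)² + (4y)² + (4z - √2)² = 17^k + 2 passes through exactly k + 1 points of ℤ³. -/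
/-!
Since `√2` is irrational, a lattice point on the sphere has `z = 0`, and the sphere equation
becomes `N(w) = 17^k` for the Gaussian integer `w = (4x - 1) + 4y i ≡ -1 (mod 4)`. With
`ρ = 1 + 4i` we have `17 = ρ ρ̄`, and unique factorisation in `ℤ[i]` shows that every element of
norm `17^k` is associated to exactly one `ρ^j ρ̄^(k-j)` with `0 ≤ j ≤ k` (`j` is the multiplicity
of `ρ`). As `ρ ≡ ρ̄ ≡ 1 (mod 4)`, each of these `k + 1` associate classes contains exactly one
element `≡ -1 (mod 4)`, namely `-ρ^j ρ̄^(k-j)`.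
-/

theorem emultiplicity_pow_mul_pow {α : Type*} [CommMonoidWithZero α] [IsCancelMulZero α]
    {p q : α} (hp : Prime p) (hpq : ¬p ∣ q) (j m : ℕ) : emultiplicity p (p ^ j * q ^ m) = j := by
  rw [emultiplicity_mul hp, emultiplicity_pow_self_of_prime hp,
    emultiplicity_eq_zero.2 fun h ↦ hpq (hp.dvd_of_dvd_pow h), add_zero]

theorem Irrational.intCast_eq_intCast_mul_iff {x : ℝ} (hx : Irrational x) {m n : ℤ} :
    (m : ℝ) = n * x ↔ m = 0 ∧ n = 0 := by
  refine ⟨fun h ↦ ?_, fun ⟨hm, hn⟩ ↦ by simp [hm, hn]⟩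
  obtain rfl : n = 0 := by
    by_contra hn
    exact (hx.intCast_mul hn).ne_int m h.symm
  exact ⟨by simpa using h, rfl⟩

namespace Zsqrtd

variable {d : ℤ}

theorem norm_pow (z : ℤ√d) (n : ℕ) : (z ^ n).norm = z.norm ^ n :=
  map_pow normMonoidHom z n

theorem irreducible_of_prime_norm {z : ℤ√d} (h : Prime z.norm) : Irreducible z := by
  refine ⟨fun hz ↦ h.not_isUnit ((isUnit_iff_norm_isUnit z).1 hz), fun a b hab ↦ ?_⟩
  rw [isUnit_iff_norm_isUnit, isUnit_iff_norm_isUnit]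
  exact h.irreducible.isUnit_or_isUnit (by rw [hab, norm_mul])

theorem exists_associated_pow_mul_star_pow {π : ℤ√d} (hπ : Prime π) (hπ0 : π.norm ≠ 0)
    (k : ℕ) : ∀ {z : ℤ√d}, z.norm = π.norm ^ k →
      ∃ j ≤ k, Associated (π ^ j * star π ^ (k - j)) z := by
  induction k with
  | zero =>
    intro z hz
    refine ⟨0, le_rfl, ?_⟩
    rw [pow_zero, pow_zero, mul_one]
    exact (associated_one_iff_isUnit.2 ((isUnit_iff_norm_isUnit z).2 (by simp [hz]))).symm
  | succ k ih =>
    intro z hz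
    have hdvd : π ∣ z * star z := by
      rw [← norm_eq_mul_conj, hz, Int.cast_pow, norm_eq_mul_conj]
      exact (dvd_mul_right π _).pow k.succ_ne_zero
    have norm_cofactor : ∀ {σ w : ℤ√d}, σ.norm = π.norm → (σ * w).norm = π.norm ^ (k + 1) →
        w.norm = π.norm ^ k := fun hσ h ↦
      mul_left_cancel₀ hπ0 (by rwa [norm_mul, hσ, pow_succ'] at h)
    rcases hπ.dvd_or_dvd hdvd with ⟨w, rfl⟩ | hstar
    · obtain ⟨j, hj, hw⟩ := ih (norm_cofactor rfl hz)
      refine ⟨j + 1, by omega, ?_⟩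
      rw [Nat.add_sub_add_right, pow_succ', mul_assoc]
      exact hw.mul_left π
    · obtain ⟨w, rfl⟩ : star π ∣ z := by
        simpa [starRingEnd_apply, star_star] using map_dvd (starRingEnd (ℤ√d)) hstar
      obtain ⟨j, hj, hw⟩ := ih (norm_cofactor (norm_conj π) hz)
      refine ⟨j, by omega, ?_⟩
      rw [Nat.sub_add_comm hj, pow_succ', mul_left_comm]
      exact hw.mul_left _

end Zsqrtd

namespace GaussianInt

theorem prime_of_prime_norm {z : GaussianInt} (h : Prime z.norm) : Prime z :=
  (Zsqrtd.irreducible_of_prime_norm h).prime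

theorem norm_mk (a b : ℤ) : (⟨a, b⟩ : GaussianInt).norm = a ^ 2 + b ^ 2 := by
  rw [Zsqrtd.norm_def]; ring

theorem eq_one_or_of_isUnit {u : GaussianInt} (hu : IsUnit u) :
    u = 1 ∨ u = -1 ∨ u = ⟨0, 1⟩ ∨ u = ⟨0, -1⟩ := by
  obtain ⟨a, b⟩ := u
  have hab : a ^ 2 + b ^ 2 = 1 := by
    rw [← norm_mk]; exact (Zsqrtd.norm_eq_one_iff' (by norm_num) _).2 hu
  have ha₁ : -1 ≤ a := by nlinarith
  have ha₂ : a ≤ 1 := by nlinarith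
  have hb₁ : -1 ≤ b := by nlinarith
  have hb₂ : b ≤ 1 := by nlinarith
  interval_cases a <;> interval_cases b <;> simp_all [Zsqrtd.ext_iff]

theorem four_dvd_add_one_iff (z : GaussianInt) :
    (4 : GaussianInt) ∣ z + 1 ↔ 4 ∣ z.re + 1 ∧ 4 ∣ z.im := by
  have := Zsqrtd.intCast_dvd (d := -1) 4 (z + 1)
  rw [Zsqrtd.re_add, Zsqrtd.im_add, Zsqrtd.re_one, Zsqrtd.im_one, add_zero] at this
  exact_mod_cast this

theorem eq_of_associated_of_four_dvd_add_one {z w : GaussianInt} (h : Associated z w)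
    (hz : (4 : GaussianInt) ∣ z + 1) (hw : (4 : GaussianInt) ∣ w + 1) : z = w := by
  obtain ⟨u, rfl⟩ := h
  rw [four_dvd_add_one_iff] at hz hw
  rcases eq_one_or_of_isUnit u.isUnit with hu | hu | hu | hu <;>
    simp [hu] at hw ⊢ <;> omega

theorem ncard_setOf_norm_eq_pow_four_dvd_add_one {ρ : GaussianInt} (hρ : Prime ρ)
    (hρρ : ¬ρ ∣ star ρ) (h4 : (4 : GaussianInt) ∣ ρ - 1) (k : ℕ) :
    {z : GaussianInt | z.norm = ρ.norm ^ k ∧ (4 : GaussianInt) ∣ z + 1}.ncard = k + 1 := by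
  have hmod : ∀ j m, ρ ^ j * star ρ ^ m ≡ 1 [SMOD Ideal.span {(4 : GaussianInt)}] := by
    have h : ρ ≡ 1 [SMOD Ideal.span {(4 : GaussianInt)}] :=
      SModEq.sub_mem.2 (Ideal.mem_span_singleton.2 h4)
    have h' : star ρ ≡ 1 [SMOD Ideal.span {(4 : GaussianInt)}] :=
      SModEq.sub_mem.2 (Ideal.mem_span_singleton.2
        (by simpa [starRingEnd_apply, star_ofNat] using map_dvd (starRingEnd _) h4))
    intro j m
    simpa using (h.pow j).mul (h'.pow m)
  let f : ℕ → GaussianInt := fun j ↦ -(ρ ^ j * star ρ ^ (k - j))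
  have hf : ∀ j ≤ k,
      f j ∈ {z : GaussianInt | z.norm = ρ.norm ^ k ∧ (4 : GaussianInt) ∣ z + 1} := by
    intro j hj
    refine ⟨?_, ?_⟩
    · simp only [f, Zsqrtd.norm_neg, Zsqrtd.norm_mul, Zsqrtd.norm_pow, Zsqrtd.norm_conj,
        ← pow_add, Nat.add_sub_cancel' hj]
    · rw [neg_add_eq_sub, ← neg_sub, dvd_neg, ← Ideal.mem_span_singleton]
      exact SModEq.sub_mem.1 (hmod j (k - j))
  rw [← Nat.card_Iic k, ← Set.ncard_coe_finset, Finset.coe_Iic, eq_comm]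
  refine Set.ncard_congr (fun j _ ↦ f j) (fun j hj ↦ hf j hj) (fun j j' _ _ h ↦ ?_) ?_
  · simpa [emultiplicity_pow_mul_pow hρ hρρ] using congrArg (emultiplicity ρ) (neg_inj.1 h)
  · rintro z ⟨hz, hz4⟩
    obtain ⟨j, hj, hjz⟩ :=
      Zsqrtd.exists_associated_pow_mul_star_pow hρ (norm_eq_zero.not.2 hρ.ne_zero) k hz
    exact ⟨j, hj, eq_of_associated_of_four_dvd_add_one hjz.neg_left (hf j hj).2 hz4⟩

end GaussianInt

theorem latticePoint_mem_sphere_iff (x y z n : ℤ) :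
    (4 * (x : ℝ) - 1) ^ 2 + (4 * (y : ℝ)) ^ 2 + (4 * (z : ℝ) - √2) ^ 2 = n + 2 ↔
      z = 0 ∧ (⟨4 * x - 1, 4 * y⟩ : GaussianInt).norm = n := by
  have hs : √2 ^ 2 = 2 := Real.sq_sqrt (by norm_num)
  have hsplit : (4 * (x : ℝ) - 1) ^ 2 + (4 * (y : ℝ)) ^ 2 + (4 * (z : ℝ) - √2) ^ 2 = n + 2 ↔
      (((4 * x - 1) ^ 2 + (4 * y) ^ 2 + 16 * z ^ 2 - n : ℤ) : ℝ) = (8 * z : ℤ) * √2 := by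
    push_cast
    constructor <;> intro h
    · linear_combination h - hs
    · linear_combination h + hs
  rw [hsplit, irrational_sqrt_two.intCast_eq_intCast_mul_iff, GaussianInt.norm_mk]
  constructor
  · rintro ⟨h, hz⟩
    obtain rfl : z = 0 := by omega
    exact ⟨rfl, by linarith⟩
  · rintro ⟨rfl, h⟩
    exact ⟨by linarith, by simp⟩

theorem ncard_latticePoints_sphere (n : ℤ) :
    {p : ℤ × ℤ × ℤ | (4 * (p.1 : ℝ) - 1) ^ 2 + (4 * (p.2.1 : ℝ)) ^ 2 +
        (4 * (p.2.2 : ℝ) - √2) ^ 2 = n + 2}.ncard =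
      {w : GaussianInt | w.norm = n ∧ (4 : GaussianInt) ∣ w + 1}.ncard := by
  simp_rw [latticePoint_mem_sphere_iff]
  refine Set.ncard_congr (fun p _ ↦ ⟨4 * p.1 - 1, 4 * p.2.1⟩) ?_ ?_ ?_
  · rintro p ⟨-, hp⟩
    exact ⟨hp, (GaussianInt.four_dvd_add_one_iff _).2 (by simp)⟩
  · rintro ⟨x, y, z⟩ ⟨x', y', z'⟩ ⟨rfl, -⟩ ⟨rfl, -⟩ h
    simp only [Zsqrtd.mk.injEq] at h
    simp only [Prod.mk.injEq, and_true]
    omega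
  · rintro w ⟨hw, hw4⟩
    rw [GaussianInt.four_dvd_add_one_iff] at hw4
    have hw' : (⟨4 * ((w.re + 1) / 4) - 1, 4 * (w.im / 4)⟩ : GaussianInt) = w :=
      Zsqrtd.ext (by dsimp only; omega) (by dsimp only; omega)
    exact ⟨((w.re + 1) / 4, w.im / 4, 0), ⟨rfl, by rw [hw', hw]⟩, hw'⟩

/-- For every `k ≥ 0`, the sphere `(4x-1)² + (4y)² + (4z-√2)² = 17^k + 2` in `ℝ³`
passes through exactly `k + 1` points of `ℤ³`. -/
theorem stmt_10 (k : ℕ) :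
    Set.ncard {p : ℤ × ℤ × ℤ |
      (4 * (p.1 : ℝ) - 1) ^ 2 + (4 * (p.2.1 : ℝ)) ^ 2 +
        (4 * (p.2.2 : ℝ) - Real.sqrt 2) ^ 2 = 17 ^ k + 2} = k + 1 := by
  let ρ : GaussianInt := ⟨1, 4⟩
  have hρ_norm : ρ.norm = 17 := rfl
  have hρ : Prime ρ :=
    GaussianInt.prime_of_prime_norm (hρ_norm ▸ Int.prime_iff_natAbs_prime.2 (by norm_num))
  have hρρ : ¬ρ ∣ star ρ := fun h ↦ by
    -- otherwise `ρ ∣ ρ + ρ̄ = 2`, i.e. `17 ∣ 4` on norms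
    have := map_dvd Zsqrtd.normMonoidHom (dvd_add dvd_rfl h)
    norm_num [ρ, Zsqrtd.normMonoidHom, GaussianInt.norm_mk] at this
  have h4 : (4 : GaussianInt) ∣ ρ - 1 := ⟨⟨0, 1⟩, by decide⟩
  have h17 : (17 : ℝ) ^ k = ((ρ.norm ^ k : ℤ) : ℝ) := by simp [hρ_norm]
  rw [h17, ncard_latticePoints_sphere,
    GaussianInt.ncard_setOf_norm_eq_pow_four_dvd_add_one hρ hρρ h4 k]
end
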